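/- arXiv:2108.12795 — 5 statements merged into one kernel-verified Lean document; each statement's English description precedes it below -/
import Mathlib

section
/- Let τ be a random variable with PMF p on 𝒟. Then for every integer l with 1 ≤ l ≤ τ̄, the autocorrelation at lag l of the channel-uncertainty impulse response satisfies E[Σ_{i=0}^{τ̄−l} ω_i(τ) · ω_{i+l}(τ)] = −Σ_{i=0}^{τ̄−l} α_i α_{i+l} p_i p_{i+l}. (Equation (16) of the paper, the value r(l).) -/
open MeasureTheory ProbabilityTheory Finset

/-!
Writing `1_i` for the indicator of `{τ = i}`, we have `ω_i = α_i (1_i - E 1_i)`, so the `i`-th term of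
the autocorrelation has expectation `α_i α_{i+l} cov(1_i, 1_{i+l})`. The covariance of two indicators is
`P(A ∩ B) - P(A) P(B)`, and for `l ≥ 1` the events `{τ = i}` and `{τ = i + l}` are disjoint.
-/

namespace ProbabilityTheory

variable {Ω : Type*} [MeasurableSpace Ω] {μ : Measure Ω} [IsProbabilityMeasure μ] {s t : Set Ω}

lemma memLp_indicator_one (hs : MeasurableSet s) (q : ENNReal) :
    MemLp (s.indicator (1 : Ω → ℝ)) q μ :=
  (memLp_const 1).indicator hs

lemma integrable_centered_indicator_one_mul (hs : MeasurableSet s) (ht : MeasurableSet t) :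
    Integrable (fun x ↦ (s.indicator (1 : Ω → ℝ) x - μ[s.indicator 1]) *
      (t.indicator (1 : Ω → ℝ) x - μ[t.indicator 1])) μ :=
  ((memLp_indicator_one hs 2).sub (memLp_const _)).integrable_mul
    ((memLp_indicator_one ht 2).sub (memLp_const _))

lemma covariance_indicator_one (hs : MeasurableSet s) (ht : MeasurableSet t) :
    cov[s.indicator 1, t.indicator 1; μ] = μ.real (s ∩ t) - μ.real s * μ.real t := by
  rw [covariance_eq_sub (memLp_indicator_one hs 2) (memLp_indicator_one ht 2),
    ← Set.inter_indicator_one, integral_indicator_one (hs.inter ht), integral_indicator_one hs,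
    integral_indicator_one ht]

lemma covariance_indicator_one_of_disjoint (hs : MeasurableSet s) (ht : MeasurableSet t)
    (hst : Disjoint s t) :
    cov[s.indicator 1, t.indicator 1; μ] = -(μ.real s * μ.real t) := by
  rw [covariance_indicator_one hs ht, hst.inter_eq, measureReal_empty, zero_sub]

end ProbabilityTheory

theorem autocorrelation_lag_l_general
    {Ω : Type*} [MeasurableSpace Ω] (μ : Measure Ω) [IsProbabilityMeasure μ]
    (τbar : ℕ) (α p : ℕ → ℝ)
    (hp01 : ∀ i ≤ τbar, p i ∈ Set.Icc (0 : ℝ) 1)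
    (X : Ω → ℕ)
    (hXmeas : Measurable X)
    (hXpmf : ∀ i ≤ τbar, μ {x | X x = i} = ENNReal.ofReal (p i))
    (l : ℕ) (hl : 1 ≤ l) (hlτ : l ≤ τbar) :
    ∫ x, ∑ i ∈ Finset.range (τbar - l + 1),
        (α i * ((if X x = i then (1 : ℝ) else 0) - p i)) *
          (α (i + l) * ((if X x = i + l then (1 : ℝ) else 0) - p (i + l))) ∂μ =
      -∑ i ∈ Finset.range (τbar - l + 1), α i * α (i + l) * p i * p (i + l) := by
  set A : ℕ → Set Ω := fun i ↦ X ⁻¹' {i}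
  have hA : ∀ i, MeasurableSet (A i) := fun i ↦ hXmeas (measurableSet_singleton i)
  have hind : ∀ i x, (if X x = i then (1 : ℝ) else 0) = (A i).indicator 1 x := fun i x ↦ by
    by_cases h : X x = i <;> simp [A, h]
  have hprob : ∀ i ≤ τbar, μ.real (A i) = p i := fun i hi ↦ by
    rw [measureReal_def, show A i = {x | X x = i} from rfl, hXpmf i hi,
      ENNReal.toReal_ofReal (hp01 i hi).1]
  have hmean : ∀ i ≤ τbar, μ[(A i).indicator 1] = p i := fun i hi ↦ by
    rw [integral_indicator_one (hA i), hprob i hi]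
  have hrange : ∀ i ∈ range (τbar - l + 1), i ≤ τbar ∧ i + l ≤ τbar := fun i hi ↦ by
    rw [mem_range] at hi; omega
  calc _ = ∫ x, ∑ i ∈ range (τbar - l + 1), α i * α (i + l) *
        (((A i).indicator 1 x - μ[(A i).indicator 1]) *
          ((A (i + l)).indicator 1 x - μ[(A (i + l)).indicator 1])) ∂μ := by
        refine integral_congr_ae (ae_of_all _ fun x ↦ sum_congr rfl fun i hi ↦ ?_)
        rw [hind, hind, hmean i (hrange i hi).1, hmean (i + l) (hrange i hi).2]
        ring
    _ = ∑ i ∈ range (τbar - l + 1), α i * α (i + l) *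
        cov[(A i).indicator 1, (A (i + l)).indicator 1; μ] := by
        rw [integral_finsetSum _ fun i _ ↦
          (integrable_centered_indicator_one_mul (hA i) (hA (i + l))).const_mul _]
        simp_rw [integral_const_mul, covariance]
    _ = _ := by
        rw [← sum_neg_distrib]
        refine sum_congr rfl fun i hi ↦ ?_
        have hdisj : Disjoint (A i) (A (i + l)) :=
          (Set.disjoint_singleton.mpr (by omega)).preimage X
        rw [covariance_indicator_one_of_disjoint (hA i) (hA (i + l)) hdisj,
          hprob i (hrange i hi).1, hprob (i + l) (hrange i hi).2]
        ring

/-- Equation (16): the lag-`l` autocorrelation of the channel-uncertainty impulse response,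
for `1 ≤ l ≤ τ̄`. -/
theorem autocorrelation_lag_l
    {Ω : Type*} [MeasurableSpace Ω] (μ : Measure Ω) [IsProbabilityMeasure μ]
    (τbar : ℕ) (hτbar : 1 ≤ τbar) (α p : ℕ → ℝ)
    (hp01 : ∀ i ≤ τbar, p i ∈ Set.Icc (0 : ℝ) 1)
    (hpsum : ∑ i ∈ Finset.range (τbar + 1), p i = 1)
    (X : Ω → ℕ)
    (hXmeas : Measurable X)
    (hXrange : ∀ x, X x ≤ τbar)
    (hXpmf : ∀ i ≤ τbar, μ {x | X x = i} = ENNReal.ofReal (p i))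
    (l : ℕ) (hl : 1 ≤ l) (hlτ : l ≤ τbar) :
    ∫ x, ∑ i ∈ Finset.range (τbar - l + 1),
        (α i * ((if X x = i then (1 : ℝ) else 0) - p i)) *
          (α (i + l) * ((if X x = i + l then (1 : ℝ) else 0) - p (i + l))) ∂μ =
      -∑ i ∈ Finset.range (τbar - l + 1), α i * α (i + l) * p i * p (i + l) :=
  autocorrelation_lag_l_general μ τbar α p hp01 X hXmeas hXpmf l hl hlτ
end

section
/- For every nonzero complex number z, the energy spectral density S_Ω(z) = Σ_{l=−τ̄}^{τ̄} r(l) z^{−l} satisfies S_Ω(z) = (1/2) Σ_{i₁=0}^{τ̄} Σ_{i₂=0}^{τ̄} (α_{i₁} z^{i₁} − α_{i₂} z^{i₂})(α_{i₁} z^{−i₁} − α_{i₂} z^{−i₂}) p_{i₁} p_{i₂}. (Lemma 3.2.) -/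
open Finset

lemma lt_part (n : ℕ) (g : ℕ → ℕ → ℂ) :
    ∑ q ∈ (Finset.range (n+1) ×ˢ Finset.range (n+1)).filter (fun q => q.1 < q.2), g q.1 q.2 =
      ∑ l ∈ Finset.Icc 1 n, ∑ i ∈ Finset.range (n - l + 1), g i (i + l) := by
  rw [Finset.sum_sigma']
  refine Finset.sum_nbij' (fun q => ⟨q.2 - q.1, q.1⟩) (fun s => (s.2, s.2 + s.1)) ?_ ?_ ?_ ?_ ?_
  · intro q hq
    simp only [Finset.mem_filter, Finset.mem_product, Finset.mem_range] at hq
    simp only [Finset.mem_sigma, Finset.mem_Icc, Finset.mem_range]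
    omega
  · intro s hs
    simp only [Finset.mem_sigma, Finset.mem_Icc, Finset.mem_range] at hs
    simp only [Finset.mem_filter, Finset.mem_product, Finset.mem_range]
    omega
  · intro q hq
    simp only [Finset.mem_filter, Finset.mem_product, Finset.mem_range] at hq
    dsimp only
    rw [Nat.add_sub_cancel' hq.2.le]
  · intro s hs
    simp only [Finset.mem_sigma, Finset.mem_Icc, Finset.mem_range] at hs
    dsimp only
    rw [Nat.add_sub_cancel_left]
  · intro q hq
    simp only [Finset.mem_filter, Finset.mem_product, Finset.mem_range] at hq
    dsimp only
    congr 1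
    omega

lemma diag_part (n : ℕ) (g : ℕ → ℕ → ℂ) :
    ∑ q ∈ (Finset.range (n+1) ×ˢ Finset.range (n+1)).filter (fun q => q.1 = q.2), g q.1 q.2 =
      ∑ i ∈ Finset.range (n+1), g i i := by
  refine Finset.sum_nbij' (fun q => q.1) (fun i => (i, i)) ?_ ?_ ?_ ?_ ?_ <;>
    simp_all [Finset.mem_filter, Finset.mem_product, Prod.ext_iff]

lemma decomp (n : ℕ) (g : ℕ → ℕ → ℂ) :
    ∑ i₁ ∈ Finset.range (n+1), ∑ i₂ ∈ Finset.range (n+1), g i₁ i₂ =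
      (∑ i ∈ Finset.range (n+1), g i i) +
      ∑ l ∈ Finset.Icc 1 n, ∑ i ∈ Finset.range (n - l + 1), (g i (i + l) + g (i + l) i) := by
  rw [← Finset.sum_product']
  have h1 := Finset.sum_filter_add_sum_filter_not
    (Finset.range (n+1) ×ˢ Finset.range (n+1)) (fun q => q.1 = q.2) (fun q => g q.1 q.2)
  have h2 := Finset.sum_filter_add_sum_filter_not
    (((Finset.range (n+1) ×ˢ Finset.range (n+1))).filter (fun q => ¬ q.1 = q.2))
    (fun q => q.1 < q.2) (fun q => g q.1 q.2)
  rw [Finset.filter_filter, Finset.filter_filter] at h2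
  have e1 : ((Finset.range (n+1) ×ˢ Finset.range (n+1)).filter (fun q => ¬ q.1 = q.2 ∧ q.1 < q.2))
      = (Finset.range (n+1) ×ˢ Finset.range (n+1)).filter (fun q => q.1 < q.2) := by
    apply Finset.filter_congr; intro q _; constructor <;> intro h <;> omega
  have e2 : ((Finset.range (n+1) ×ˢ Finset.range (n+1)).filter (fun q => ¬ q.1 = q.2 ∧ ¬ q.1 < q.2))
      = (Finset.range (n+1) ×ˢ Finset.range (n+1)).filter (fun q => q.2 < q.1) := by
    apply Finset.filter_congr; intro q _; constructor <;> intro h <;> omega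
  rw [e1, e2] at h2
  have e3 : ∑ q ∈ (Finset.range (n+1) ×ˢ Finset.range (n+1)).filter (fun q => q.2 < q.1), g q.1 q.2
      = ∑ q ∈ (Finset.range (n+1) ×ˢ Finset.range (n+1)).filter (fun q => q.1 < q.2), g q.2 q.1 := by
    refine Finset.sum_nbij' (fun q => (q.2, q.1)) (fun q => (q.2, q.1)) ?_ ?_ ?_ ?_ ?_ <;>
      simp_all [Finset.mem_filter, Finset.mem_product, Prod.ext_iff, Finset.mem_range]
  rw [e3, lt_part n g, lt_part n (fun a b => g b a)] at h2
  rw [← h1, ← h2, diag_part]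
  simp only [Finset.sum_add_distrib]

/-- Lemma 3.2: closed form of the energy spectral density
`S_Ω(z) = ∑_{l=-τ̄}^{τ̄} r(l) z^{-l}`. -/
theorem spectral_density_closed_form
    (τbar : ℕ) (hτbar : 1 ≤ τbar) (α p : ℕ → ℝ)
    (hp01 : ∀ i ≤ τbar, p i ∈ Set.Icc (0 : ℝ) 1)
    (hpsum : ∑ i ∈ Finset.range (τbar + 1), p i = 1)
    (r : ℤ → ℝ)
    (hr0 : r 0 = ∑ i ∈ Finset.range (τbar + 1), α i ^ 2 * p i * (1 - p i))
    (hrl : ∀ l : ℕ, 1 ≤ l → l ≤ τbar →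
      r l = -∑ i ∈ Finset.range (τbar - l + 1), α i * α (i + l) * p i * p (i + l))
    (hrsym : ∀ l : ℤ, r (-l) = r l)
    (hrbig : ∀ l : ℤ, (τbar : ℤ) < |l| → r l = 0)
    (z : ℂ) (hz : z ≠ 0) :
    ∑ l ∈ Finset.Icc (-(τbar : ℤ)) (τbar : ℤ), (r l : ℂ) * z ^ (-l) =
      (1 / 2) * ∑ i₁ ∈ Finset.range (τbar + 1), ∑ i₂ ∈ Finset.range (τbar + 1),
        ((α i₁ : ℂ) * z ^ (i₁ : ℤ) - (α i₂ : ℂ) * z ^ (i₂ : ℤ)) *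
          ((α i₁ : ℂ) * z ^ (-(i₁ : ℤ)) - (α i₂ : ℂ) * z ^ (-(i₂ : ℤ))) *
          (p i₁ : ℂ) * (p i₂ : ℂ) := by
  set n := τbar with hn
  have hP : (∑ i ∈ Finset.range (n + 1), (p i : ℂ)) = 1 := by
    exact_mod_cast congrArg (fun x : ℝ => (x : ℂ)) hpsum
  set g : ℕ → ℕ → ℂ := fun i₁ i₂ =>
    (α i₁ : ℂ) * (α i₂) * (p i₁) * (p i₂) * z ^ ((i₁ : ℤ) - (i₂ : ℤ)) with hg
  set T : ℂ := ∑ i₁ ∈ Finset.range (n+1), ∑ i₂ ∈ Finset.range (n+1), g i₁ i₂ with hT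
  set S : ℂ := ∑ i ∈ Finset.range (n+1), (α i : ℂ)^2 * (p i) with hS
  set Q : ℂ := ∑ i ∈ Finset.range (n+1), (α i : ℂ)^2 * (p i)^2 with hQ
  have hmul : ∀ a b : ℤ, z ^ a * z ^ (-b) = z ^ (a - b) := by
    intro a b
    rw [← zpow_add₀ hz, ← sub_eq_add_neg]
  -- RHS computation
  have hRHS : (∑ i₁ ∈ Finset.range (n + 1), ∑ i₂ ∈ Finset.range (n + 1),
        ((α i₁ : ℂ) * z ^ (i₁ : ℤ) - (α i₂ : ℂ) * z ^ (i₂ : ℤ)) *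
          ((α i₁ : ℂ) * z ^ (-(i₁ : ℤ)) - (α i₂ : ℂ) * z ^ (-(i₂ : ℤ))) *
          (p i₁ : ℂ) * (p i₂ : ℂ)) = 2 * (S - T) := by
    have hterm : ∀ i₁ i₂ : ℕ,
        ((α i₁ : ℂ) * z ^ (i₁ : ℤ) - (α i₂ : ℂ) * z ^ (i₂ : ℤ)) *
          ((α i₁ : ℂ) * z ^ (-(i₁ : ℤ)) - (α i₂ : ℂ) * z ^ (-(i₂ : ℤ))) *
          (p i₁ : ℂ) * (p i₂ : ℂ)
        = (α i₁ : ℂ)^2 * p i₁ * p i₂ + (p i₁ : ℂ) * ((α i₂ : ℂ)^2 * p i₂)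
          - g i₁ i₂ - g i₂ i₁ := by
      intro i₁ i₂
      have e11 : z ^ (i₁ : ℤ) * z ^ (-(i₁ : ℤ)) = 1 := by rw [hmul]; simp
      have e22 : z ^ (i₂ : ℤ) * z ^ (-(i₂ : ℤ)) = 1 := by rw [hmul]; simp
      have e12 : z ^ (i₁ : ℤ) * z ^ (-(i₂ : ℤ)) = z ^ ((i₁ : ℤ) - (i₂ : ℤ)) := hmul _ _
      have e21 : z ^ (i₂ : ℤ) * z ^ (-(i₁ : ℤ)) = z ^ ((i₂ : ℤ) - (i₁ : ℤ)) := hmul _ _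
      simp only [hg]
      linear_combination ((α i₁ : ℂ)^2 * (p i₁) * (p i₂)) * e11
        + ((α i₂ : ℂ)^2 * (p i₁) * (p i₂)) * e22
        - ((α i₁ : ℂ) * (α i₂) * (p i₁) * (p i₂)) * e12
        - ((α i₁ : ℂ) * (α i₂) * (p i₁) * (p i₂)) * e21
    rw [Finset.sum_congr rfl fun i₁ _ => Finset.sum_congr rfl fun i₂ _ => hterm i₁ i₂]
    simp only [Finset.sum_add_distrib, Finset.sum_sub_distrib]
    have hA : ∑ i₁ ∈ Finset.range (n+1), ∑ i₂ ∈ Finset.range (n+1),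
        (α i₁ : ℂ)^2 * p i₁ * p i₂ = S := by
      simp only [← Finset.mul_sum, hP, mul_one, hS]
    have hB : ∑ i₁ ∈ Finset.range (n+1), ∑ i₂ ∈ Finset.range (n+1),
        (p i₁ : ℂ) * ((α i₂ : ℂ)^2 * p i₂) = S := by
      rw [Finset.sum_comm]
      simp only [← Finset.sum_mul, hP, one_mul, hS]
    have hD : ∑ i₁ ∈ Finset.range (n+1), ∑ i₂ ∈ Finset.range (n+1), g i₂ i₁ = T := by
      rw [Finset.sum_comm]
    rw [hA, hB, hD, ← hT]
    ring
  rw [hRHS, show (1/2:ℂ) * (2*(S-T)) = S - T by ring]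
  -- LHS computation
  have hdec := decomp n g
  have hdiag : ∑ i ∈ Finset.range (n+1), g i i = Q := by
    apply Finset.sum_congr rfl
    intro i _
    simp only [hg, hQ, sub_self, zpow_zero, mul_one]
    ring
  rw [hdiag, ← hT] at hdec
  -- split the Icc sum
  have hsplit : Finset.Icc (-(n:ℤ)) (n:ℤ) = Finset.Icc (-(n:ℤ)) (-1) ∪ Finset.Icc 0 (n:ℤ) := by
    ext x
    simp only [Finset.mem_Icc, Finset.mem_union]
    omega
  have hdisj : Disjoint (Finset.Icc (-(n:ℤ)) (-1)) (Finset.Icc 0 (n:ℤ)) := by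
    rw [Finset.disjoint_left]
    intro x hx hx'
    simp only [Finset.mem_Icc] at hx hx'
    omega
  have hins : Finset.Icc (0:ℤ) (n:ℤ) = insert 0 (Finset.Icc 1 (n:ℤ)) := by
    ext x
    simp only [Finset.mem_Icc, Finset.mem_insert]
    omega
  have hnotmem : (0:ℤ) ∉ Finset.Icc 1 (n:ℤ) := by simp
  have himg : Finset.Icc (-(n:ℤ)) (-1) = Finset.image (fun x : ℤ => -x) (Finset.Icc 1 (n:ℤ)) := by
    ext x
    simp only [Finset.mem_Icc, Finset.mem_image]
    constructor
    · intro h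
      exact ⟨-x, by omega, by omega⟩
    · rintro ⟨a, ha, rfl⟩
      omega
  have hcast : Finset.Icc (1:ℤ) (n:ℤ) = Finset.image (Nat.cast) (Finset.Icc 1 n) := by
    ext x
    simp only [Finset.mem_Icc, Finset.mem_image]
    constructor
    · intro h
      exact ⟨x.toNat, by omega, by omega⟩
    · rintro ⟨a, ha, rfl⟩
      omega
  rw [hsplit, Finset.sum_union hdisj, hins, Finset.sum_insert hnotmem, himg,
    Finset.sum_image (by intro a _ b _ h; simpa using h),
    hcast, Finset.sum_image (by intro a _ b _ h; exact_mod_cast h),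
    Finset.sum_image (by intro a _ b _ h; exact_mod_cast h)]
  -- now the sum is over ℕ-indexed Icc 1 n
  have hr0' : (r 0 : ℂ) = S - Q := by
    rw [hr0]
    push_cast
    rw [hS, hQ, ← Finset.sum_sub_distrib]
    apply Finset.sum_congr rfl
    intro i _
    ring
  simp only [neg_neg, neg_zero, zpow_zero, mul_one]
  rw [hr0']
  have hneg : ∀ l : ℕ, l ∈ Finset.Icc 1 n →
      ((r (-(l:ℤ)) : ℂ) * z ^ ((l:ℤ)) + (r (l:ℤ) : ℂ) * z ^ (-(l:ℤ)))
        = -(∑ i ∈ Finset.range (n - l + 1), (g i (i + l) + g (i + l) i)) := by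
    intro l hl
    simp only [Finset.mem_Icc] at hl
    have hcl : ∀ i : ℕ, ((i:ℤ) - ((i + l : ℕ) : ℤ)) = -(l:ℤ) := by intro i; push_cast; ring
    have hcl' : ∀ i : ℕ, (((i + l : ℕ) : ℤ) - (i:ℤ)) = (l:ℤ) := by intro i; push_cast; ring
    rw [hrsym, hrl l hl.1 hl.2]
    push_cast
    rw [neg_mul, neg_mul, ← neg_add, Finset.sum_mul, Finset.sum_mul, ← Finset.sum_add_distrib]
    congr 1
    apply Finset.sum_congr rfl
    intro i _
    simp only [hg, hcl, hcl']
    ring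
  have hAB : (∑ x ∈ Finset.Icc 1 n, (r (-(x:ℤ)) : ℂ) * z ^ (x:ℤ)) +
      (∑ x ∈ Finset.Icc 1 n, (r (x:ℤ) : ℂ) * z ^ (-(x:ℤ))) = Q - T := by
    rw [← Finset.sum_add_distrib, Finset.sum_congr rfl hneg, Finset.sum_neg_distrib, hdec]
    ring
  linear_combination hAB
end

section
/- For every real θ, the energy spectral density on the unit circle satisfies Σ_{l=−τ̄}^{τ̄} r(l) e^{−ilθ} = (1/2) Σ_{i₁=0}^{τ̄} Σ_{i₂=0}^{τ̄} |α_{i₁} e^{i i₁ θ} − α_{i₂} e^{i i₂ θ}|² p_{i₁} p_{i₂}; in particular this quantity is a nonnegative real number. -/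
open Finset Complex


lemma fiber_sum (n k : ℕ) (g : ℕ → ℂ) :
    ∑ x ∈ (Finset.range n ×ˢ Finset.range n).filter
        (fun x => (x.1 : ℤ) - (x.2 : ℤ) = (k : ℤ)), g x.1 * g x.2
      = ∑ i ∈ Finset.range (n - k), g (i + k) * g i := by
  refine Finset.sum_nbij' (i := fun x => x.2) (j := fun i => (i + k, i)) ?_ ?_ ?_ ?_ ?_
  · intro a ha
    simp only [Finset.mem_filter, Finset.mem_product, Finset.mem_range] at ha ⊢
    omega
  · intro a ha
    simp only [Finset.mem_filter, Finset.mem_product, Finset.mem_range] at ha ⊢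
    omega
  · intro a ha
    simp only [Finset.mem_filter, Finset.mem_product, Finset.mem_range] at ha
    ext
    · simp; omega
    · simp
  · intro a ha; rfl
  · intro a ha
    simp only [Finset.mem_filter, Finset.mem_product, Finset.mem_range] at ha
    obtain ⟨_, h⟩ := ha
    have : a.1 = a.2 + k := by omega
    rw [this]

lemma fiber_swap (n : ℕ) (l : ℤ) (g : ℕ → ℂ) :
    ∑ x ∈ (Finset.range n ×ˢ Finset.range n).filter
        (fun x => (x.1 : ℤ) - (x.2 : ℤ) = l), g x.1 * g x.2
      = ∑ x ∈ (Finset.range n ×ˢ Finset.range n).filter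
        (fun x => (x.1 : ℤ) - (x.2 : ℤ) = -l), g x.1 * g x.2 := by
  refine Finset.sum_nbij' (i := Prod.swap) (j := Prod.swap) ?_ ?_ ?_ ?_ ?_
  · intro a ha
    simp only [Finset.mem_filter, Finset.mem_product, Finset.mem_range,
      Prod.fst_swap, Prod.snd_swap] at ha ⊢
    omega
  · intro a ha
    simp only [Finset.mem_filter, Finset.mem_product, Finset.mem_range,
      Prod.fst_swap, Prod.snd_swap] at ha ⊢
    omega
  · intro a _; simp
  · intro a _; simp
  · intro a _; exact mul_comm _ _


lemma lhs_eq (τbar : ℕ) (α p : ℕ → ℝ) (θ : ℝ) (r : ℤ → ℝ)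
    (hr0 : r 0 = ∑ i ∈ Finset.range (τbar + 1), α i ^ 2 * p i * (1 - p i))
    (hrl : ∀ l : ℕ, 1 ≤ l → l ≤ τbar →
      r l = -∑ i ∈ Finset.range (τbar - l + 1), α i * α (i + l) * p i * p (i + l))
    (hrsym : ∀ l : ℤ, r (-l) = r l) :
    ∑ l ∈ Finset.Icc (-(τbar : ℤ)) (τbar : ℤ),
        (r l : ℂ) * Complex.exp (-Complex.I * (l : ℂ) * (θ : ℂ))
    = ((∑ i ∈ Finset.range (τbar+1), α i ^ 2 * p i : ℝ) : ℂ)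
      - ∑ i₁ ∈ Finset.range (τbar + 1), ∑ i₂ ∈ Finset.range (τbar + 1),
          ((α i₁ * p i₁ : ℝ) : ℂ) * ((α i₂ * p i₂ : ℝ) : ℂ) *
            Complex.exp (Complex.I * (((i₁ : ℤ) - (i₂ : ℤ) : ℤ) : ℂ) * (θ : ℂ)) := by
  set n := τbar + 1 with hn
  set G : ℕ → ℂ := fun i => ((α i * p i : ℝ) : ℂ) with hG
  set E : ℤ → ℂ := fun l => Complex.exp (Complex.I * (l : ℂ) * (θ : ℂ)) with hE
  set C : ℤ → ℂ := fun l => ∑ x ∈ (Finset.range n ×ˢ Finset.range n).filter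
      (fun x => (x.1 : ℤ) - (x.2 : ℤ) = l), G x.1 * G x.2 with hC
  set S : ℂ := ((∑ i ∈ Finset.range n, α i ^ 2 * p i : ℝ) : ℂ) with hS
  -- D decomposition
  have hD : ∑ i₁ ∈ Finset.range n, ∑ i₂ ∈ Finset.range n,
      G i₁ * G i₂ * E ((i₁ : ℤ) - (i₂ : ℤ))
      = ∑ l ∈ Finset.Icc (-(τbar : ℤ)) (τbar : ℤ), C l * E l := by
    rw [← Finset.sum_product']
    rw [← Finset.sum_fiberwise_of_maps_to (g := fun x : ℕ × ℕ => (x.1 : ℤ) - x.2)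
        (t := Finset.Icc (-(τbar:ℤ)) τbar) ?_ (fun x => G x.1 * G x.2 * E ((x.1:ℤ) - x.2))]
    · refine Finset.sum_congr rfl fun l _ => ?_
      rw [hC, Finset.sum_mul]
      refine Finset.sum_congr rfl fun x hx => ?_
      simp only [Finset.mem_filter] at hx
      rw [hx.2]
    · intro x hx
      simp only [Finset.mem_product, Finset.mem_range, hn] at hx
      simp only [Finset.mem_Icc]
      omega
  -- positive-lag formula
  have hpos : ∀ k : ℕ, 1 ≤ k → k ≤ τbar → (r (k : ℤ) : ℂ) = - C (k : ℤ) := by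
    intro k hk1 hk2
    simp only [hC]
    rw [fiber_sum n k G, hrl k hk1 hk2]
    have hnk : n - k = τbar - k + 1 := by omega
    rw [hnk]
    push_cast
    rw [neg_inj, ← neg_neg (∑ i ∈ Finset.range (τbar - k + 1),
      (G (i + k) * G i))]
    push_cast
    rw [neg_neg]
    refine Finset.sum_congr rfl fun i _ => ?_
    rw [hG]
    push_cast
    ring
  have hkey : ∀ l ∈ Finset.Icc (-(τbar : ℤ)) (τbar : ℤ),
      (r l : ℂ) = (if l = 0 then S else 0) - C l := by
    intro l hl
    simp only [Finset.mem_Icc] at hl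
    rcases lt_trichotomy l 0 with hneg | h0 | hposl
    · have hms : r l = r (-l) := by
        have := hrsym (-l); rwa [neg_neg] at this
      have hCs : C l = C (-l) := by rw [hC]; exact fiber_swap n l G
      have hml : -l = ((-l).toNat : ℤ) := by omega
      rw [if_neg (by omega), hms, hCs, hml]
      rw [hpos (-l).toNat (by omega) (by omega)]
      ring
    · subst h0
      rw [if_pos rfl]
      simp only [hC]
      have hf0 := fiber_sum n 0 G
      simp only [Nat.cast_zero, Nat.sub_zero, add_zero] at hf0
      rw [hf0, hr0, hS]
      have hreal : ∑ i ∈ Finset.range n, α i ^ 2 * p i * (1 - p i)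
          = (∑ i ∈ Finset.range n, α i ^ 2 * p i)
            - ∑ i ∈ Finset.range n, (α i * p i) * (α i * p i) := by
        rw [← Finset.sum_sub_distrib]
        refine Finset.sum_congr rfl fun i _ => ?_
        ring
      rw [hreal]
      push_cast
      simp only [hG]
      push_cast
      ring
    · have hml : l = (l.toNat : ℤ) := by omega
      rw [if_neg (by omega), hml, hpos l.toNat (by omega) (by omega)]
      ring
  calc ∑ l ∈ Finset.Icc (-(τbar : ℤ)) (τbar : ℤ),
        (r l : ℂ) * Complex.exp (-Complex.I * (l : ℂ) * (θ : ℂ))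
      = ∑ l ∈ Finset.Icc (-(τbar : ℤ)) (τbar : ℤ), (r l : ℂ) * E (-l) := by
        refine Finset.sum_congr rfl fun l _ => ?_
        simp only [hE]
        congr 2
        push_cast
        ring
    _ = ∑ l ∈ Finset.Icc (-(τbar : ℤ)) (τbar : ℤ), (r (-l) : ℂ) * E l := by
        refine Finset.sum_nbij' (i := fun l => -l) (j := fun l => -l) ?_ ?_ ?_ ?_ ?_
        · intro a ha; simp only [Finset.mem_Icc] at ha ⊢; omega
        · intro a ha; simp only [Finset.mem_Icc] at ha ⊢; omega
        · intro a _; ring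
        · intro a _; ring
        · intro a _; rw [neg_neg]
    _ = ∑ l ∈ Finset.Icc (-(τbar : ℤ)) (τbar : ℤ), ((if l = 0 then S else 0) - C l) * E l := by
        refine Finset.sum_congr rfl fun l hl => ?_
        rw [hrsym l, hkey l hl]
    _ = ∑ l ∈ Finset.Icc (-(τbar : ℤ)) (τbar : ℤ), ((if l = 0 then S * E l else 0) - C l * E l) := by
        refine Finset.sum_congr rfl fun l _ => ?_
        rw [sub_mul, ite_mul, zero_mul]
    _ = S - ∑ l ∈ Finset.Icc (-(τbar : ℤ)) (τbar : ℤ), C l * E l := by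
        rw [Finset.sum_sub_distrib]
        congr 1
        rw [Finset.sum_ite_eq' (Finset.Icc (-(τbar : ℤ)) (τbar : ℤ)) 0 (fun l => S * E l)]
        rw [if_pos (by simp [Finset.mem_Icc])]
        have : E 0 = 1 := by rw [hE]; norm_num
        rw [this, mul_one]
    _ = _ := by rw [← hD, hS]

lemma rhs_eq (τbar : ℕ) (α p : ℕ → ℝ) (θ : ℝ)
    (hpsum : ∑ i ∈ Finset.range (τbar + 1), p i = 1) :
    (((1 / 2) * ∑ i₁ ∈ Finset.range (τbar + 1), ∑ i₂ ∈ Finset.range (τbar + 1),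
        ‖((α i₁ : ℂ) * Complex.exp (Complex.I * (i₁ : ℂ) * (θ : ℂ)) -
            (α i₂ : ℂ) * Complex.exp (Complex.I * (i₂ : ℂ) * (θ : ℂ)))‖ ^ 2 *
          p i₁ * p i₂ : ℝ) : ℂ)
    = ((∑ i ∈ Finset.range (τbar+1), α i ^ 2 * p i : ℝ) : ℂ)
      - ∑ i₁ ∈ Finset.range (τbar + 1), ∑ i₂ ∈ Finset.range (τbar + 1),
          ((α i₁ * p i₁ : ℝ) : ℂ) * ((α i₂ * p i₂ : ℝ) : ℂ) *
            Complex.exp (Complex.I * (((i₁ : ℤ) - (i₂ : ℤ) : ℤ) : ℂ) * (θ : ℂ)) := by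
  have habs : ∀ w : ℂ, ((‖w‖ : ℝ) : ℂ) ^ 2 = w * (starRingEnd ℂ) w := by
    intro w
    rw [← Complex.ofReal_pow, Complex.sq_norm]
    exact (Complex.mul_conj w).symm
  have hconj : ∀ i : ℕ, (starRingEnd ℂ) ((α i : ℂ) * Complex.exp (Complex.I * (i : ℂ) * (θ : ℂ)))
      = (α i : ℂ) * Complex.exp (-Complex.I * (i : ℂ) * (θ : ℂ)) := by
    intro i
    rw [map_mul, Complex.conj_ofReal, ← Complex.exp_conj]
    congr 1
    simp only [map_mul, Complex.conj_I, Complex.conj_natCast, Complex.conj_ofReal]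
  have hmul : ∀ a b : ℕ, Complex.exp (Complex.I * (a : ℂ) * (θ : ℂ)) *
      Complex.exp (-Complex.I * (b : ℂ) * (θ : ℂ))
      = Complex.exp (Complex.I * (((a : ℤ) - (b : ℤ) : ℤ) : ℂ) * (θ : ℂ)) := by
    intro a b
    rw [← Complex.exp_add]
    congr 1
    push_cast
    ring
  have hone : ∀ a : ℕ, Complex.exp (Complex.I * (a : ℂ) * (θ : ℂ)) *
      Complex.exp (-Complex.I * (a : ℂ) * (θ : ℂ)) = 1 := by
    intro a
    rw [← Complex.exp_add, ← Complex.exp_zero]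
    congr 1
    ring
  have hterm : ∀ i₁ i₂ : ℕ,
      ((‖((α i₁ : ℂ) * Complex.exp (Complex.I * (i₁ : ℂ) * (θ : ℂ)) -
            (α i₂ : ℂ) * Complex.exp (Complex.I * (i₂ : ℂ) * (θ : ℂ)))‖ : ℝ) : ℂ) ^ 2 *
          (p i₁ : ℂ) * (p i₂ : ℂ)
      = (α i₁ : ℂ)^2 * (p i₁ : ℂ) * (p i₂ : ℂ) + (α i₂ : ℂ)^2 * (p i₁ : ℂ) * (p i₂ : ℂ)
        - ((α i₁ * p i₁ : ℝ) : ℂ) * ((α i₂ * p i₂ : ℝ) : ℂ) *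
            Complex.exp (Complex.I * (((i₁ : ℤ) - (i₂ : ℤ) : ℤ) : ℂ) * (θ : ℂ))
        - ((α i₁ * p i₁ : ℝ) : ℂ) * ((α i₂ * p i₂ : ℝ) : ℂ) *
            Complex.exp (Complex.I * (((i₂ : ℤ) - (i₁ : ℤ) : ℤ) : ℂ) * (θ : ℂ)) := by
    intro i₁ i₂
    rw [habs, map_sub, hconj, hconj]
    have expand : ((α i₁ : ℂ) * Complex.exp (Complex.I * (i₁ : ℂ) * (θ : ℂ)) -
            (α i₂ : ℂ) * Complex.exp (Complex.I * (i₂ : ℂ) * (θ : ℂ))) *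
        ((α i₁ : ℂ) * Complex.exp (-Complex.I * (i₁ : ℂ) * (θ : ℂ)) -
            (α i₂ : ℂ) * Complex.exp (-Complex.I * (i₂ : ℂ) * (θ : ℂ))) *
          (p i₁ : ℂ) * (p i₂ : ℂ)
        = ((α i₁ : ℂ)^2 * (Complex.exp (Complex.I * (i₁ : ℂ) * (θ : ℂ)) * Complex.exp (-Complex.I * (i₁ : ℂ) * (θ : ℂ)))
          + (α i₂ : ℂ)^2 * (Complex.exp (Complex.I * (i₂ : ℂ) * (θ : ℂ)) * Complex.exp (-Complex.I * (i₂ : ℂ) * (θ : ℂ)))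
          - (α i₁ : ℂ) * (α i₂ : ℂ) * (Complex.exp (Complex.I * (i₁ : ℂ) * (θ : ℂ)) * Complex.exp (-Complex.I * (i₂ : ℂ) * (θ : ℂ)))
          - (α i₁ : ℂ) * (α i₂ : ℂ) * (Complex.exp (Complex.I * (i₂ : ℂ) * (θ : ℂ)) * Complex.exp (-Complex.I * (i₁ : ℂ) * (θ : ℂ))))
          * (p i₁ : ℂ) * (p i₂ : ℂ) := by
      ring
    rw [expand, hone, hone, hmul, hmul]
    push_cast
    ring
  have hps : ∑ i ∈ Finset.range (τbar + 1), (p i : ℂ) = 1 := by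
    have := congrArg (fun x : ℝ => (x : ℂ)) hpsum
    push_cast at this
    exact this
  calc (((1 / 2) * ∑ i₁ ∈ Finset.range (τbar + 1), ∑ i₂ ∈ Finset.range (τbar + 1),
        ‖((α i₁ : ℂ) * Complex.exp (Complex.I * (i₁ : ℂ) * (θ : ℂ)) -
            (α i₂ : ℂ) * Complex.exp (Complex.I * (i₂ : ℂ) * (θ : ℂ)))‖ ^ 2 *
          p i₁ * p i₂ : ℝ) : ℂ)
      = (1/2 : ℂ) * ∑ i₁ ∈ Finset.range (τbar + 1), ∑ i₂ ∈ Finset.range (τbar + 1),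
        (((‖((α i₁ : ℂ) * Complex.exp (Complex.I * (i₁ : ℂ) * (θ : ℂ)) -
            (α i₂ : ℂ) * Complex.exp (Complex.I * (i₂ : ℂ) * (θ : ℂ)))‖ : ℝ) : ℂ) ^ 2 *
          (p i₁ : ℂ) * (p i₂ : ℂ)) := by
        push_cast
        ring
    _ = (1/2 : ℂ) * ∑ i₁ ∈ Finset.range (τbar + 1), ∑ i₂ ∈ Finset.range (τbar + 1),
        ((α i₁ : ℂ)^2 * (p i₁ : ℂ) * (p i₂ : ℂ) + (α i₂ : ℂ)^2 * (p i₁ : ℂ) * (p i₂ : ℂ)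
        - ((α i₁ * p i₁ : ℝ) : ℂ) * ((α i₂ * p i₂ : ℝ) : ℂ) *
            Complex.exp (Complex.I * (((i₁ : ℤ) - (i₂ : ℤ) : ℤ) : ℂ) * (θ : ℂ))
        - ((α i₁ * p i₁ : ℝ) : ℂ) * ((α i₂ * p i₂ : ℝ) : ℂ) *
            Complex.exp (Complex.I * (((i₂ : ℤ) - (i₁ : ℤ) : ℤ) : ℂ) * (θ : ℂ))) := by
        congr 1
        refine Finset.sum_congr rfl fun i₁ _ => Finset.sum_congr rfl fun i₂ _ => hterm i₁ i₂
    _ = _ := by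
        simp only [Finset.sum_sub_distrib, Finset.sum_add_distrib]
        have e1 : ∑ i₁ ∈ Finset.range (τbar + 1), ∑ i₂ ∈ Finset.range (τbar + 1),
            (α i₁ : ℂ)^2 * (p i₁ : ℂ) * (p i₂ : ℂ)
            = ((∑ i ∈ Finset.range (τbar+1), α i ^ 2 * p i : ℝ) : ℂ) := by
          push_cast
          refine Finset.sum_congr rfl fun i _ => ?_
          simp only [mul_assoc]
          rw [← Finset.mul_sum, ← Finset.mul_sum, hps, mul_one]
        have e2 : ∑ i₁ ∈ Finset.range (τbar + 1), ∑ i₂ ∈ Finset.range (τbar + 1),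
            (α i₂ : ℂ)^2 * (p i₁ : ℂ) * (p i₂ : ℂ)
            = ((∑ i ∈ Finset.range (τbar+1), α i ^ 2 * p i : ℝ) : ℂ) := by
          rw [Finset.sum_comm]
          push_cast
          refine Finset.sum_congr rfl fun i _ => ?_
          have : ∀ j : ℕ, (α i : ℂ)^2 * (p j : ℂ) * (p i : ℂ)
              = ((α i : ℂ)^2 * (p i : ℂ)) * (p j : ℂ) := fun j => by ring
          simp only [this]
          rw [← Finset.mul_sum, hps, mul_one]
        have e4 : ∑ i₁ ∈ Finset.range (τbar + 1), ∑ i₂ ∈ Finset.range (τbar + 1),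
            ((α i₁ * p i₁ : ℝ) : ℂ) * ((α i₂ * p i₂ : ℝ) : ℂ) *
              Complex.exp (Complex.I * (((i₂ : ℤ) - (i₁ : ℤ) : ℤ) : ℂ) * (θ : ℂ))
            = ∑ i₁ ∈ Finset.range (τbar + 1), ∑ i₂ ∈ Finset.range (τbar + 1),
            ((α i₁ * p i₁ : ℝ) : ℂ) * ((α i₂ * p i₂ : ℝ) : ℂ) *
              Complex.exp (Complex.I * (((i₁ : ℤ) - (i₂ : ℤ) : ℤ) : ℂ) * (θ : ℂ)) := by
          rw [Finset.sum_comm]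
          refine Finset.sum_congr rfl fun i₁ _ => Finset.sum_congr rfl fun i₂ _ => ?_
          ring
        rw [e1, e2, e4]
        ring

/-- The energy spectral density on the unit circle is a nonnegative real:
`∑_{l=-τ̄}^{τ̄} r(l) e^{-ilθ} = (1/2) ∑∑ |α_{i₁}e^{i i₁ θ} - α_{i₂}e^{i i₂ θ}|² p_{i₁} p_{i₂} ≥ 0`. -/
theorem spectral_density_on_unit_circle_nonneg
    (τbar : ℕ) (hτbar : 1 ≤ τbar) (α p : ℕ → ℝ)
    (hp01 : ∀ i ≤ τbar, p i ∈ Set.Icc (0 : ℝ) 1)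
    (hpsum : ∑ i ∈ Finset.range (τbar + 1), p i = 1)
    (r : ℤ → ℝ)
    (hr0 : r 0 = ∑ i ∈ Finset.range (τbar + 1), α i ^ 2 * p i * (1 - p i))
    (hrl : ∀ l : ℕ, 1 ≤ l → l ≤ τbar →
      r l = -∑ i ∈ Finset.range (τbar - l + 1), α i * α (i + l) * p i * p (i + l))
    (hrsym : ∀ l : ℤ, r (-l) = r l)
    (hrbig : ∀ l : ℤ, (τbar : ℤ) < |l| → r l = 0)
    (θ : ℝ) :
    (∑ l ∈ Finset.Icc (-(τbar : ℤ)) (τbar : ℤ),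
        (r l : ℂ) * Complex.exp (-Complex.I * (l : ℂ) * (θ : ℂ)) =
      (((1 / 2) * ∑ i₁ ∈ Finset.range (τbar + 1), ∑ i₂ ∈ Finset.range (τbar + 1),
        ‖((α i₁ : ℂ) * Complex.exp (Complex.I * (i₁ : ℂ) * (θ : ℂ)) -
            (α i₂ : ℂ) * Complex.exp (Complex.I * (i₂ : ℂ) * (θ : ℂ)))‖ ^ 2 *
          p i₁ * p i₂ : ℝ) : ℂ)) ∧
    0 ≤ (1 / 2) * ∑ i₁ ∈ Finset.range (τbar + 1), ∑ i₂ ∈ Finset.range (τbar + 1),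
        ‖((α i₁ : ℂ) * Complex.exp (Complex.I * (i₁ : ℂ) * (θ : ℂ)) -
            (α i₂ : ℂ) * Complex.exp (Complex.I * (i₂ : ℂ) * (θ : ℂ)))‖ ^ 2 *
          p i₁ * p i₂ := by
  
  constructor
  · exact (lhs_eq τbar α p θ r hr0 hrl hrsym).trans (rhs_eq τbar α p θ hpsum).symm
  · have hpnn : ∀ i ∈ Finset.range (τbar + 1), 0 ≤ p i := by
      intro i hi
      exact (hp01 i (by simpa [Nat.lt_succ_iff] using hi)).1
    apply mul_nonneg (by norm_num)
    refine Finset.sum_nonneg fun i₁ h₁ => Finset.sum_nonneg fun i₂ h₂ => ?_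
    exact mul_nonneg (mul_nonneg (pow_nonneg (norm_nonneg _) 2) (hpnn i₁ h₁)) (hpnn i₂ h₂)
end

section
/- Let T_0, …, T_{τ̄} be random variables each with PMF p on 𝒟 and let U_0, …, U_{τ̄} be square-integrable real random variables. Assume that for each i, T_i is independent of U_i, and that for all i < j the random variable T_i is independent of the random vector (T_j, U_i, U_j). Then E[(Σ_{i=0}^{τ̄} ω_i(T_i) U_i)²] = Σ_{i=0}^{τ̄} α_i² p_i (1 − p_i) E[U_i²]. (Equation (27) of the paper: the second moment of the uncertainty output d(k) = Σ_i ω(k,k−i)u(k−i) with T_i = τ_{k−i}, U_i = u(k−i).) -/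
open MeasureTheory ProbabilityTheory Finset

section Aux

variable {Ω : Type*} [MeasurableSpace Ω] (μ : Measure Ω) [IsProbabilityMeasure μ]

/-- The centered indicator (times a constant) has mean zero. -/
lemma aux_integral_ind {T : Ω → ℕ} (hT : Measurable T) {i : ℕ} {pi : ℝ}
    (hpmf : μ {x | T x = i} = ENNReal.ofReal pi) (hpi : 0 ≤ pi) :
    ∫ x, (if T x = i then (1 : ℝ) else 0) ∂μ = pi := by
  have hs : MeasurableSet {x | T x = i} := hT (measurableSet_singleton i)
  have : (fun x => (if T x = i then (1 : ℝ) else 0)) =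
      Set.indicator {x | T x = i} (fun _ => (1 : ℝ)) := by
    ext x
    by_cases h : T x = i <;> simp [Set.indicator, h]
  rw [this, integral_indicator_const (1 : ℝ) hs, measureReal_def, hpmf, smul_eq_mul, mul_one,
    ENNReal.toReal_ofReal hpi]

lemma aux_ind_integrable {T : Ω → ℕ} (hT : Measurable T) (i : ℕ) :
    Integrable (fun x => (if T x = i then (1 : ℝ) else 0)) μ := by
  refine (integrable_const (1 : ℝ)).mono' ?_ ?_
  · exact ((measurable_from_top (f := fun t : ℕ => if t = i then (1 : ℝ) else 0)).comp
      hT).aestronglyMeasurable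
  · filter_upwards with x
    by_cases h : T x = i <;> simp [h]

/-- Mean of `ω_i(T) = α (1_{T=i} - p)` is `0`. -/
lemma aux_mean_zero {T : Ω → ℕ} (hT : Measurable T) {i : ℕ} {a pi : ℝ}
    (hpmf : μ {x | T x = i} = ENNReal.ofReal pi) (hpi : 0 ≤ pi) :
    ∫ x, a * ((if T x = i then (1 : ℝ) else 0) - pi) ∂μ = 0 := by
  rw [integral_const_mul, integral_sub (aux_ind_integrable μ hT i) (integrable_const _),
    aux_integral_ind μ hT hpmf hpi, integral_const, probReal_univ]
  simp

end Aux

/-- Equation (27): second moment of the channel-uncertainty output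
`d = ∑_i ω_i(T_i) U_i`. -/
theorem second_moment_d
    {Ω : Type*} [MeasurableSpace Ω] (μ : Measure Ω) [IsProbabilityMeasure μ]
    (τbar : ℕ) (hτbar : 1 ≤ τbar) (α p : ℕ → ℝ)
    (hp01 : ∀ i ≤ τbar, p i ∈ Set.Icc (0 : ℝ) 1)
    (hpsum : ∑ i ∈ Finset.range (τbar + 1), p i = 1)
    (T : ℕ → Ω → ℕ) (U : ℕ → Ω → ℝ)
    (hTmeas : ∀ i ≤ τbar, Measurable (T i))
    (hTrange : ∀ i ≤ τbar, ∀ x, T i x ≤ τbar)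
    (hTpmf : ∀ i ≤ τbar, ∀ j ≤ τbar, μ {x | T i x = j} = ENNReal.ofReal (p j))
    (hUmeas : ∀ i ≤ τbar, Measurable (U i))
    (hU : ∀ i ≤ τbar, MemLp (U i) 2 μ)
    (hTU : ∀ i ≤ τbar, IndepFun (T i) (U i) μ)
    (htriple : ∀ i j, i < j → j ≤ τbar →
      IndepFun (T i) (fun x => (T j x, U i x, U j x)) μ) :
    ∫ x, (∑ i ∈ Finset.range (τbar + 1),
        α i * ((if T i x = i then (1 : ℝ) else 0) - p i) * U i x) ^ 2 ∂μ =
      ∑ i ∈ Finset.range (τbar + 1),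
        α i ^ 2 * p i * (1 - p i) * ∫ x, (U i x) ^ 2 ∂μ := by
  set f : ℕ → Ω → ℝ := fun i x => α i * ((if T i x = i then (1 : ℝ) else 0) - p i) * U i x
    with hf
  -- the coefficient part
  set c : ℕ → Ω → ℝ := fun i x => α i * ((if T i x = i then (1 : ℝ) else 0) - p i) with hc
  have hcmeas : ∀ i ≤ τbar, Measurable (c i) := by
    intro i hi
    exact (measurable_from_top (f := fun t : ℕ =>
      α i * ((if t = i then (1 : ℝ) else 0) - p i))).comp (hTmeas i hi)
  have hcbdd : ∀ i ≤ τbar, ∀ x, ‖c i x‖ ≤ |α i| * 2 := by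
    intro i hi x
    have h1 := (hp01 i hi).1
    have h2 := (hp01 i hi).2
    simp only [hc, Real.norm_eq_abs]
    rw [abs_mul]
    refine mul_le_mul_of_nonneg_left ?_ (abs_nonneg _)
    rw [abs_le]
    by_cases h : T i x = i <;> simp [h] <;> constructor <;> linarith
  have hfmeas : ∀ i ≤ τbar, Measurable (f i) := fun i hi =>
    (hcmeas i hi).mul (hUmeas i hi)
  -- integrability of products
  have hUU : ∀ i ≤ τbar, ∀ j ≤ τbar, Integrable (fun x => U i x * U j x) μ := by
    intro i hi j hj
    have := (hU j hj).smul (φ := U i) (hU i hi)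
      (p := 2) (q := 2) (r := 1) (hpqr := ⟨by norm_num [ENNReal.inv_two_add_inv_two]⟩)
    rw [memLp_one_iff_integrable] at this
    exact this
  have hInt : ∀ i ≤ τbar, ∀ j ≤ τbar, Integrable (fun x => f i x * f j x) μ := by
    intro i hi j hj
    have : Integrable (fun x => (c i x * c j x) * (U i x * U j x)) μ := by
      refine (hUU i hi j hj).bdd_mul (c := |α i| * 2 * (|α j| * 2)) ?_ (ae_of_all _ fun x => ?_)
      · exact ((hcmeas i hi).mul (hcmeas j hj)).aestronglyMeasurable
      · rw [norm_mul]
        exact mul_le_mul (hcbdd i hi x) (hcbdd j hj x) (norm_nonneg _)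
          (by positivity)
    exact this.congr (by filter_upwards with x; simp only [hf, hc]; ring)
  -- cross terms vanish
  have hzero' : ∀ i j, i < j → j ≤ τbar → ∫ x, f i x * f j x ∂μ = 0 := by
    intro i j hij hj
    have hi : i ≤ τbar := le_trans (le_of_lt hij) hj
    set ψ : ℕ × ℝ × ℝ → ℝ :=
      fun q => α j * ((if q.1 = j then (1 : ℝ) else 0) - p j) * (q.2.1 * q.2.2) with hψ
    have hψm : Measurable ψ := by
      apply Measurable.mul
      · exact (measurable_from_top (f := fun t : ℕ =>
          α j * ((if t = j then (1 : ℝ) else 0) - p j))).comp measurable_fst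
      · exact (measurable_fst.comp measurable_snd).mul (measurable_snd.comp measurable_snd)
    have hind : IndepFun (c i) (fun x => ψ (T j x, U i x, U j x)) μ := by
      exact (htriple i j hij hj).comp
        (measurable_from_top (f := fun t : ℕ =>
          α i * ((if t = i then (1 : ℝ) else 0) - p i))) hψm
    have hprod : ∀ x, f i x * f j x = c i x * ψ (T j x, U i x, U j x) := by
      intro x; simp only [hf, hc, hψ]; ring
    calc ∫ x, f i x * f j x ∂μ
        = ∫ x, c i x * ψ (T j x, U i x, U j x) ∂μ := by
          exact integral_congr_ae (by filter_upwards with x using hprod x)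
      _ = (∫ x, c i x ∂μ) * ∫ x, ψ (T j x, U i x, U j x) ∂μ := by
          apply hind.integral_fun_mul_eq_mul_integral (hcmeas i hi).aestronglyMeasurable
          exact (hψm.comp (((hTmeas j hj).prodMk
            ((hUmeas i hi).prodMk (hUmeas j hj))))).aestronglyMeasurable
      _ = 0 := by
          rw [aux_mean_zero μ (hTmeas i hi) (hTpmf i hi i hi) (hp01 i hi).1, zero_mul]
  have hzero : ∀ i ≤ τbar, ∀ j ≤ τbar, i ≠ j → ∫ x, f i x * f j x ∂μ = 0 := by
    intro i hi j hj hne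
    rcases lt_or_gt_of_ne hne with h | h
    · exact hzero' i j h hj
    · rw [show (fun x => f i x * f j x) = fun x => f j x * f i x from
        funext fun x => mul_comm _ _]
      exact hzero' j i h hi
  -- diagonal terms
  have hdiag : ∀ i ≤ τbar, ∫ x, f i x * f i x ∂μ =
      α i ^ 2 * p i * (1 - p i) * ∫ x, (U i x) ^ 2 ∂μ := by
    intro i hi
    have hind : IndepFun (fun x => c i x * c i x) (fun x => U i x * U i x) μ := by
      have h := (hTU i hi).comp
        (φ := fun t : ℕ => (α i * ((if t = i then (1 : ℝ) else 0) - p i)) *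
          (α i * ((if t = i then (1 : ℝ) else 0) - p i)))
        (ψ := fun u : ℝ => u * u)
        measurable_from_top (measurable_id.mul measurable_id)
      exact h
    have hcsq : ∫ x, c i x * c i x ∂μ = α i ^ 2 * p i * (1 - p i) := by
      have heq : ∀ x, c i x * c i x =
          α i ^ 2 * ((1 - 2 * p i) * (if T i x = i then (1 : ℝ) else 0)) +
          α i ^ 2 * (p i ^ 2) := by
        intro x; simp only [hc]
        by_cases h : T i x = i <;> simp [h] <;> ring
      rw [integral_congr_ae (by filter_upwards with x using heq x),
        integral_add (((aux_ind_integrable μ (hTmeas i hi) i).const_mul _).const_mul _)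
          (integrable_const _),
        integral_const_mul, integral_const_mul,
        aux_integral_ind μ (hTmeas i hi) (hTpmf i hi i hi) (hp01 i hi).1,
        integral_const, probReal_univ]
      simp only [ENNReal.toReal_one, one_smul]
      ring
    calc ∫ x, f i x * f i x ∂μ
        = ∫ x, (c i x * c i x) * (U i x * U i x) ∂μ :=
          integral_congr_ae (by filter_upwards with x; simp only [hf, hc]; ring)
      _ = (∫ x, c i x * c i x ∂μ) * ∫ x, U i x * U i x ∂μ :=
          hind.integral_fun_mul_eq_mul_integral ((hcmeas i hi).mul (hcmeas i hi)).aestronglyMeasurable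
            ((hUmeas i hi).mul (hUmeas i hi)).aestronglyMeasurable
      _ = α i ^ 2 * p i * (1 - p i) * ∫ x, (U i x) ^ 2 ∂μ := by
          rw [hcsq]
          congr 1
          exact integral_congr_ae (by filter_upwards with x using (sq (U i x)).symm)
  -- expand the square of the sum
  have hexp : ∀ x, (∑ i ∈ Finset.range (τbar + 1), f i x) ^ 2 =
      ∑ i ∈ Finset.range (τbar + 1), ∑ j ∈ Finset.range (τbar + 1), f i x * f j x := by
    intro x
    rw [sq, Finset.sum_mul_sum]
  have hmem : ∀ i ∈ Finset.range (τbar + 1), i ≤ τbar := fun i hi =>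
    Nat.lt_succ_iff.mp (Finset.mem_range.mp hi)
  calc ∫ x, (∑ i ∈ Finset.range (τbar + 1), f i x) ^ 2 ∂μ
      = ∫ x, ∑ i ∈ Finset.range (τbar + 1), ∑ j ∈ Finset.range (τbar + 1),
          f i x * f j x ∂μ :=
        integral_congr_ae (by filter_upwards with x using hexp x)
    _ = ∑ i ∈ Finset.range (τbar + 1), ∑ j ∈ Finset.range (τbar + 1),
          ∫ x, f i x * f j x ∂μ := by
        rw [integral_finset_sum _ fun i hi =>
          integrable_finset_sum _ fun j hj => hInt i (hmem i hi) j (hmem j hj)]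
        exact Finset.sum_congr rfl fun i hi =>
          integral_finset_sum _ fun j hj => hInt i (hmem i hi) j (hmem j hj)
    _ = ∑ i ∈ Finset.range (τbar + 1), α i ^ 2 * p i * (1 - p i) * ∫ x, (U i x) ^ 2 ∂μ := by
        refine Finset.sum_congr rfl fun i hi => ?_
        rw [Finset.sum_eq_single i
          (fun j hj hne => hzero i (hmem i hi) j (hmem j hj) (Ne.symm hne))
          (fun h => absurd hi h)]
        exact hdiag i (hmem i hi)
end

section
/- Fix integers k and l with l > τ̄. Let (T_n)_{k−τ̄ ≤ n ≤ k+l} be random variables each with PMF p on 𝒟 and (U_n)_{k−τ̄ ≤ n ≤ k+l} square-integrable real random variables, such that for each n, T_n is independent of the σ-algebra generated by {T_{n'} : n' < n} ∪ {U_{n'} : n' ≤ n}. Set d₁ = Σ_{i=0}^{τ̄} ω_i(T_{k−i}) U_{k−i} and d₂ = Σ_{j=0}^{τ̄} ω_j(T_{k+l−j}) U_{k+l−j}. Then E[d₁ d₂] = 0. (Equation (31) of the paper.) -/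
open MeasureTheory ProbabilityTheory Finset

/-- Equation (31): for lags `l > τ̄` the channel-uncertainty outputs are uncorrelated. -/
theorem lag_beyond_correlation_d_zero
    {Ω : Type*} [MeasurableSpace Ω] (μ : Measure Ω) [IsProbabilityMeasure μ]
    (τbar : ℕ) (hτbar : 1 ≤ τbar) (α p : ℕ → ℝ)
    (hp01 : ∀ i ≤ τbar, p i ∈ Set.Icc (0 : ℝ) 1)
    (hpsum : ∑ i ∈ Finset.range (τbar + 1), p i = 1)
    (k : ℤ) (l : ℕ) (hl : τbar < l)
    (T : ℤ → Ω → ℕ) (U : ℤ → Ω → ℝ)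
    (hTmeas : ∀ n ∈ Set.Icc (k - (τbar : ℤ)) (k + (l : ℤ)), Measurable (T n))
    (hTrange : ∀ n ∈ Set.Icc (k - (τbar : ℤ)) (k + (l : ℤ)), ∀ x, T n x ≤ τbar)
    (hTpmf : ∀ n ∈ Set.Icc (k - (τbar : ℤ)) (k + (l : ℤ)), ∀ i ≤ τbar,
      μ {x | T n x = i} = ENNReal.ofReal (p i))
    (hUmeas : ∀ n ∈ Set.Icc (k - (τbar : ℤ)) (k + (l : ℤ)), Measurable (U n))
    (hU : ∀ n ∈ Set.Icc (k - (τbar : ℤ)) (k + (l : ℤ)), MemLp (U n) 2 μ)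
    (hind : ∀ n ∈ Set.Icc (k - (τbar : ℤ)) (k + (l : ℤ)),
      Indep (MeasurableSpace.comap (T n) ⊤)
        ((⨆ n' ∈ {m : ℤ | m ∈ Set.Icc (k - (τbar : ℤ)) (k + (l : ℤ)) ∧ m < n},
            MeasurableSpace.comap (T n') ⊤) ⊔
          (⨆ n' ∈ {m : ℤ | m ∈ Set.Icc (k - (τbar : ℤ)) (k + (l : ℤ)) ∧ m ≤ n},
            MeasurableSpace.comap (U n') inferInstance)) μ) :
    ∫ x, (∑ i ∈ Finset.range (τbar + 1),
            α i * ((if T (k - (i : ℤ)) x = i then (1 : ℝ) else 0) - p i) * U (k - (i : ℤ)) x) *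
          (∑ j ∈ Finset.range (τbar + 1),
            α j * ((if T (k + (l : ℤ) - (j : ℤ)) x = j then (1 : ℝ) else 0) - p j) *
              U (k + (l : ℤ) - (j : ℤ)) x) ∂μ = 0 := by
  set S : Set ℤ := Set.Icc (k - (τbar : ℤ)) (k + (l : ℤ)) with hS
  -- membership facts
  have hmS : ∀ i : ℕ, i ≤ τbar → (k - (i : ℤ)) ∈ S := by
    intro i hi
    simp only [hS, Set.mem_Icc]
    omega
  have hnS : ∀ j : ℕ, j ≤ τbar → (k + (l : ℤ) - (j : ℤ)) ∈ S := by
    intro j hj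
    simp only [hS, Set.mem_Icc]
    omega
  -- the summands
  set W : ℤ → ℕ → Ω → ℝ :=
    fun n i x => α i * ((if T n x = i then (1 : ℝ) else 0) - p i) * U n x with hW
  -- measurability of the indicator factor
  have hχmeas : ∀ n ∈ S, ∀ i : ℕ,
      Measurable (fun x => (if T n x = i then (1 : ℝ) else 0)) := by
    intro n hn i
    exact Measurable.ite (hTmeas n hn (measurableSet_singleton i))
      measurable_const measurable_const
  have hWmeas : ∀ n ∈ S, ∀ i : ℕ, Measurable (W n i) := by
    intro n hn i
    exact (measurable_const.mul ((hχmeas n hn i).sub measurable_const)).mul (hUmeas n hn)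
  -- each summand is in L²
  have hWL2 : ∀ n ∈ S, ∀ i ≤ τbar, MemLp (W n i) 2 μ := by
    intro n hn i hi
    have hφ : MemLp (fun x => α i * ((if T n x = i then (1 : ℝ) else 0) - p i)) ⊤ μ := by
      refine memLp_top_of_bound
        ((measurable_const.mul ((hχmeas n hn i).sub measurable_const)).aestronglyMeasurable)
        (|α i|) (Filter.Eventually.of_forall fun x => ?_)
      have h01 := hp01 i hi
      simp only [Set.mem_Icc] at h01
      rw [Real.norm_eq_abs, abs_mul]
      have h1 : |(if T n x = i then (1 : ℝ) else 0) - p i| ≤ 1 := by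
        rw [abs_le]; split_ifs <;> constructor <;> linarith [h01.1, h01.2]
      calc |α i| * |(if T n x = i then (1 : ℝ) else 0) - p i| ≤ |α i| * 1 :=
            mul_le_mul_of_nonneg_left h1 (abs_nonneg _)
        _ = |α i| := mul_one _
    exact (hU n hn).smul (r := 2) hφ
  -- products of summands are integrable
  have hInt : ∀ m ∈ S, ∀ n ∈ S, ∀ i ≤ τbar, ∀ j ≤ τbar,
      Integrable (fun x => W m i x * W n j x) μ := by
    intro m hm n hn i hi j hj
    have h1 : (1 : ENNReal) / 1 = 1 / 2 + 1 / 2 := by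
      rw [ENNReal.add_halves, one_div_one]
    exact ((hWL2 n hn j hj).smul (r := 1) (hWL2 m hm i hi)).integrable le_rfl
  -- each cross term has zero integral
  have hzero : ∀ i ≤ τbar, ∀ j ≤ τbar,
      ∫ x, W (k - (i : ℤ)) i x * W (k + (l : ℤ) - (j : ℤ)) j x ∂μ = 0 := by
    intro i hi j hj
    set m : ℤ := k - (i : ℤ) with hmdef
    set n : ℤ := k + (l : ℤ) - (j : ℤ) with hndef
    have hm : m ∈ S := hmS i hi
    have hn : n ∈ S := hnS j hj
    have hmn : m < n := by omega
    set f : Ω → ℝ := fun x => α j * ((if T n x = j then (1 : ℝ) else 0) - p j) with hf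
    set g : Ω → ℝ := fun x => (α i * ((if T m x = i then (1 : ℝ) else 0) - p i) * U m x) * U n x
      with hg
    have hfg : (fun x => W m i x * W n j x) = fun x => f x * g x := by
      funext x; simp only [hW, hf, hg]; ring
    -- independence
    have hindep : IndepFun f g μ := by
      rw [IndepFun_iff_Indep]
      refine indep_of_indep_of_le_right (indep_of_indep_of_le_left (hind n hn) ?_) ?_
      · have hcomp : f = (fun t : ℕ => α j * ((if t = j then (1 : ℝ) else 0) - p j)) ∘ T n := rfl
        rw [hcomp, ← MeasurableSpace.comap_comp]
        exact MeasurableSpace.comap_mono le_top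
      · rw [← measurable_iff_comap_le]
        have hle1 : MeasurableSpace.comap (T m) ⊤ ≤
            (⨆ n' ∈ {m' : ℤ | m' ∈ S ∧ m' < n}, MeasurableSpace.comap (T n') ⊤) ⊔
              (⨆ n' ∈ {m' : ℤ | m' ∈ S ∧ m' ≤ n},
                MeasurableSpace.comap (U n') inferInstance) :=
          le_trans (le_biSup (fun n' => MeasurableSpace.comap (T n') ⊤)
            (show m ∈ {m' : ℤ | m' ∈ S ∧ m' < n} from ⟨hm, hmn⟩)) le_sup_left
        have hleUm : MeasurableSpace.comap (U m) inferInstance ≤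
            (⨆ n' ∈ {m' : ℤ | m' ∈ S ∧ m' < n}, MeasurableSpace.comap (T n') ⊤) ⊔
              (⨆ n' ∈ {m' : ℤ | m' ∈ S ∧ m' ≤ n},
                MeasurableSpace.comap (U n') inferInstance) :=
          le_trans (le_biSup (fun n' => MeasurableSpace.comap (U n') inferInstance)
            (show m ∈ {m' : ℤ | m' ∈ S ∧ m' ≤ n} from ⟨hm, le_of_lt hmn⟩)) le_sup_right
        have hleUn : MeasurableSpace.comap (U n) inferInstance ≤
            (⨆ n' ∈ {m' : ℤ | m' ∈ S ∧ m' < n}, MeasurableSpace.comap (T n') ⊤) ⊔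
              (⨆ n' ∈ {m' : ℤ | m' ∈ S ∧ m' ≤ n},
                MeasurableSpace.comap (U n') inferInstance) :=
          le_trans (le_biSup (fun n' => MeasurableSpace.comap (U n') inferInstance)
            (show n ∈ {m' : ℤ | m' ∈ S ∧ m' ≤ n} from ⟨hn, le_refl n⟩)) le_sup_right
        have hsetm : MeasurableSet[(⨆ n' ∈ {m' : ℤ | m' ∈ S ∧ m' < n},
            MeasurableSpace.comap (T n') ⊤) ⊔
              (⨆ n' ∈ {m' : ℤ | m' ∈ S ∧ m' ≤ n},
                MeasurableSpace.comap (U n') inferInstance)] {x | T m x = i} :=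
          hle1 _ ⟨{i}, trivial, rfl⟩
        have hχ : Measurable[(⨆ n' ∈ {m' : ℤ | m' ∈ S ∧ m' < n},
            MeasurableSpace.comap (T n') ⊤) ⊔
              (⨆ n' ∈ {m' : ℤ | m' ∈ S ∧ m' ≤ n},
                MeasurableSpace.comap (U n') inferInstance)]
            (fun x => if T m x = i then (1 : ℝ) else 0) :=
          Measurable.ite hsetm measurable_const measurable_const
        have hUm' := measurable_iff_comap_le.mpr hleUm
        have hUn' := measurable_iff_comap_le.mpr hleUn
        exact ((measurable_const.mul (hχ.sub measurable_const)).mul hUm').mul hUn'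
    -- expectation of f is zero
    have hEf : ∫ x, f x ∂μ = 0 := by
      have hs : MeasurableSet {x | T n x = j} := hTmeas n hn (measurableSet_singleton j)
      have hχind : (fun x => if T n x = j then (1 : ℝ) else 0) =
          Set.indicator {x | T n x = j} (1 : Ω → ℝ) := by
        funext x
        by_cases hx : T n x = j <;> simp [Set.indicator, hx]
      have hχint : Integrable (fun x => if T n x = j then (1 : ℝ) else 0) μ := by
        rw [hχind]
        exact (integrable_const (1 : ℝ)).indicator hs
      simp only [hf]
      rw [MeasureTheory.integral_const_mul,
        integral_sub hχint (integrable_const _), hχind, integral_indicator_one hs, measureReal_def,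
        hTpmf n hn j hj, integral_const, probReal_univ, one_smul,
        ENNReal.toReal_ofReal (hp01 j hj).1, sub_self, mul_zero]
    rw [hfg, hindep.integral_fun_mul_eq_mul_integral ((measurable_const.mul ((hχmeas n hn j).sub
      measurable_const)).aestronglyMeasurable)
      (((measurable_const.mul ((hχmeas m hm i).sub measurable_const)).mul
        (hUmeas m hm)).mul (hUmeas n hn)).aestronglyMeasurable, hEf, zero_mul]
  -- put everything together
  have hrw : ∀ x : Ω,
      (∑ i ∈ Finset.range (τbar + 1), W (k - (i : ℤ)) i x) *
        (∑ j ∈ Finset.range (τbar + 1), W (k + (l : ℤ) - (j : ℤ)) j x) =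
      ∑ i ∈ Finset.range (τbar + 1), ∑ j ∈ Finset.range (τbar + 1),
        W (k - (i : ℤ)) i x * W (k + (l : ℤ) - (j : ℤ)) j x := fun x =>
    Finset.sum_mul_sum _ _ _ _
  calc ∫ x, (∑ i ∈ Finset.range (τbar + 1), W (k - (i : ℤ)) i x) *
        (∑ j ∈ Finset.range (τbar + 1), W (k + (l : ℤ) - (j : ℤ)) j x) ∂μ
      = ∫ x, ∑ i ∈ Finset.range (τbar + 1), ∑ j ∈ Finset.range (τbar + 1),
          W (k - (i : ℤ)) i x * W (k + (l : ℤ) - (j : ℤ)) j x ∂μ := by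
        exact integral_congr_ae (Filter.Eventually.of_forall hrw)
    _ = ∑ i ∈ Finset.range (τbar + 1), ∫ x, ∑ j ∈ Finset.range (τbar + 1),
          W (k - (i : ℤ)) i x * W (k + (l : ℤ) - (j : ℤ)) j x ∂μ := by
        refine integral_finset_sum _ fun i hi => integrable_finset_sum _ fun j hj => ?_
        exact hInt _ (hmS i (Nat.lt_succ_iff.mp (Finset.mem_range.mp hi))) _
          (hnS j (Nat.lt_succ_iff.mp (Finset.mem_range.mp hj)))
          i (Nat.lt_succ_iff.mp (Finset.mem_range.mp hi))
          j (Nat.lt_succ_iff.mp (Finset.mem_range.mp hj))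
    _ = 0 := by
        refine Finset.sum_eq_zero fun i hi => ?_
        have hi' := Nat.lt_succ_iff.mp (Finset.mem_range.mp hi)
        rw [integral_finset_sum _ fun j hj => hInt _ (hmS i hi') _
          (hnS j (Nat.lt_succ_iff.mp (Finset.mem_range.mp hj))) i hi'
          j (Nat.lt_succ_iff.mp (Finset.mem_range.mp hj))]
        exact Finset.sum_eq_zero fun j hj =>
          hzero i hi' j (Nat.lt_succ_iff.mp (Finset.mem_range.mp hj))
end
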